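/- Let γ > 1, set m = 1/(γ-1), let K > 0 and 0 < r₀ < R < ∞. Suppose U ∈ C²([r₀, R)) is positive on [r₀, R), satisfies U''(r) + (2/r) U'(r) + K U(r)^m = 0 on (r₀, R), has U'(r₀) < 0, and [r₀, R) is right-maximal in the sense that U cannot be continued as a positive C² solution of this equation to any interval [r₀, R+ε) with ε > 0. Then the limit lim_{r→R⁻} U(r)/(R-r) exists and is a positive real number; consequently ρ := U^{1/(γ-1)} satisfies ρ(r)·(R-r)^{-1/(γ-1)} → C for some constant C > 0 as r → R⁻. -/

import Mathlib

/-!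
Write `m = 1/(γ-1)`. The equation says `(r² U')' = -K r² U^m ≤ 0`. Since `U'(r₀) < 0`, some
`r₁ > r₀` has `U'(r₁) < 0`; from there on `r² U'` decreases and stays negative, so `U` decreases.
Then `U ≤ U(r₁)` bounds `(r² U')'`, so `r² U'` has a finite limit: `U' → l < 0` and `U → δ ≥ 0`
as `r → R⁻`. If `δ > 0`, the first-order system `(U, U')' = (U', -2U'/r - K U^m)` is `C¹` near
`(R, δ, l)`, and Picard–Lindelöf with uniqueness continues `U` past `R`, against maximality.
So `U(R⁻) = 0` and l'Hôpital gives `U(r)/(R - r) → -l > 0`; taking `m`-th powers gives the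
statement for `ρ = U^m`.
-/

open Real Set Filter Topology Metric Function
open scoped NNReal

theorem contDiffOn_two_of_hasDerivAt {F : Type*} [NormedAddCommGroup F] [NormedSpace ℝ F]
    {y y' y'' : ℝ → F} {s : Set ℝ} (hs : IsOpen s)
    (hy : ∀ t ∈ s, HasDerivAt y (y' t) t) (hy' : ∀ t ∈ s, HasDerivAt y' (y'' t) t)
    (hy'' : ContinuousOn y'' s) : ContDiffOn ℝ 2 y s := by
  rw [show (2 : WithTop ℕ∞) = 1 + 1 by norm_num, contDiffOn_succ_iff_deriv_of_isOpen hs]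
  refine ⟨fun t ht ↦ (hy t ht).differentiableAt.differentiableWithinAt, by simp,
    ContDiffOn.congr ?_ fun t ht ↦ (hy t ht).deriv⟩
  rw [show (1 : WithTop ℕ∞) = 0 + 1 by norm_num, contDiffOn_succ_iff_deriv_of_isOpen hs]
  exact ⟨fun t ht ↦ (hy' t ht).differentiableAt.differentiableWithinAt, by simp,
    contDiffOn_zero.2 (hy''.congr fun t ht ↦ (hy' t ht).deriv)⟩

theorem ContDiffOn.hasDerivAt_and_hasDerivAt_deriv {U : ℝ → ℝ} {s : Set ℝ} (hU : ContDiffOn ℝ 2 U s)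
    (hs : IsOpen s) {t : ℝ} (ht : t ∈ s) :
    HasDerivAt U (deriv U t) t ∧ HasDerivAt (deriv U) (deriv (deriv U) t) t :=
  ⟨((hU.differentiableOn two_ne_zero).differentiableAt (hs.mem_nhds ht)).hasDerivAt,
    (((hU.deriv_of_isOpen hs (by norm_num : (1 : WithTop ℕ∞) + 1 ≤ 2)).differentiableOn
      one_ne_zero).differentiableAt (hs.mem_nhds ht)).hasDerivAt⟩

theorem exists_deriv_neg_of_derivWithin_Ici_neg {f : ℝ → ℝ} {a b : ℝ} (hab : a < b)
    (hf : ContinuousOn f (Ico a b)) (hf' : DifferentiableOn ℝ f (Ioo a b))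
    (h : derivWithin f (Ici a) a < 0) : ∃ c ∈ Ioo a b, deriv f c < 0 := by
  by_contra! hc
  have hmono : MonotoneOn f (Ico a b) :=
    monotoneOn_of_deriv_nonneg (convex_Ico a b) hf (by rwa [interior_Ico])
      (by rwa [interior_Ico])
  have hIco : Ico a b =ᶠ[𝓝 a] Ici a := by
    rw [← Ici_inter_Iio]
    exact inter_eventuallyEq_left.2 (eventually_of_mem (Iio_mem_nhds hab) fun _ h _ ↦ h)
  have := hmono.derivWithin_nonneg (x := a)
  rw [derivWithin_congr_set hIco] at this
  linarith

theorem tendsto_div_sub_of_tendsto_deriv {f f' : ℝ → ℝ} {a b l : ℝ} (hab : a < b)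
    (hf : ∀ t ∈ Ioo a b, HasDerivAt f (f' t) t) (hf₀ : Tendsto f (𝓝[<] b) (𝓝 0))
    (hf' : Tendsto f' (𝓝[<] b) (𝓝 l)) :
    Tendsto (fun t ↦ f t / (b - t)) (𝓝[<] b) (𝓝 (-l)) := by
  refine HasDerivAt.lhopital_zero_left_on_Ioo hab hf (fun t _ ↦ (hasDerivAt_id t).const_sub b)
    (fun _ _ ↦ by norm_num) hf₀ ?_ ?_
  · simpa using ((continuous_sub_left b).tendsto b).mono_left nhdsWithin_le_nhds
  · simpa [div_neg] using hf'.neg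

theorem Filter.Tendsto.rpow_mul_rpow_neg_of_div {α : Type*} {f g : α → ℝ} {l : Filter α} {L : ℝ}
    (h : Tendsto (fun t ↦ f t / g t) l (𝓝 L)) (hL : 0 < L) (hf : ∀ᶠ t in l, 0 ≤ f t)
    (hg : ∀ᶠ t in l, 0 ≤ g t) (p : ℝ) :
    Tendsto (fun t ↦ f t ^ p * g t ^ (-p)) l (𝓝 (L ^ p)) := by
  refine (h.rpow_const (Or.inl hL.ne')).congr' ?_
  filter_upwards [hf, hg] with t hft hgt
  rw [div_rpow hft hgt, rpow_neg hgt, div_eq_mul_inv]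

theorem LipschitzOnWith.of_uncurry_closedBall {α β γ : Type*} [PseudoMetricSpace α]
    [PseudoMetricSpace β] [PseudoMetricSpace γ] {f : α → β → γ} {a t : α} {b : β} {ρ : ℝ}
    {K : ℝ≥0} (hf : LipschitzOnWith K (uncurry f) (closedBall (a, b) ρ)) (ht : dist t a ≤ ρ) :
    LipschitzOnWith K (f t) (closedBall b ρ) := by
  simpa [comp_def] using hf.comp (LipschitzWith.prodMk_left t).lipschitzOnWith
    fun y hy ↦ by rw [← closedBall_prod_same]; exact ⟨ht, hy⟩

section ODE

variable {E : Type*} [NormedAddCommGroup E] [NormedSpace ℝ E] {v : ℝ → E → E}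

theorem IsPicardLindelof.exists_eq_forall_mem_Icc_hasDerivWithinAt_mem_closedBall
    [CompleteSpace E] {tmin tmax : ℝ} {t₀ : Icc tmin tmax} {x₀ x : E} {a r L K : ℝ≥0}
    (hv : IsPicardLindelof v t₀ x₀ a r L K) (hx : x ∈ closedBall x₀ r) :
    ∃ α : ℝ → E, α t₀ = x ∧ ∀ t ∈ Icc tmin tmax,
      HasDerivWithinAt α (v t (α t)) (Icc tmin tmax) t ∧ α t ∈ closedBall x₀ a := by
  obtain ⟨α, hα⟩ := ODE.FunSpace.exists_isFixedPt_next hv hx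
  refine ⟨α.compProj, by rw [ODE.FunSpace.compProj_val, ← hα, ODE.FunSpace.next_apply₀],
    fun t ht ↦ ⟨?_, α.compProj_mem_closedBall hv.mul_max_le⟩⟩
  apply ODE.hasDerivWithinAt_picard_Icc t₀.2 hv.continuousOn_uncurry
    α.continuous_compProj.continuousOn (fun _ _ ↦ α.compProj_mem_closedBall hv.mul_max_le)
    x ht |>.congr_of_mem _ ht
  intro t' ht'
  nth_rw 1 [← hα]
  rw [ODE.FunSpace.compProj_of_mem ht', ODE.FunSpace.next_apply]

theorem exists_forall_mem_closedBall_hasDerivWithinAt_of_lipschitzOnWith [CompleteSpace E]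
    {b : ℝ} {x : E} {ρ K : ℝ≥0} (hρ : 0 < ρ)
    (hv : LipschitzOnWith K (uncurry v) (closedBall (b, x) ρ)) :
    ∃ T > (0 : ℝ), T ≤ ρ ∧ ∀ s ∈ Icc (b - T) b, ∀ y ∈ closedBall x (ρ / 2), ∃ α : ℝ → E,
      α s = y ∧ ∀ t ∈ Icc s (s + T),
        HasDerivWithinAt α (v t (α t)) (Icc s (s + T)) t ∧ α t ∈ closedBall x ρ := by
  set L : ℝ≥0 := ‖v b x‖₊ + K * ρ + 1
  have hL : (1 : ℝ) ≤ L := by simp [L]; positivity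
  set T : ℝ := ρ / (2 * L)
  have hT : 0 < T := by positivity
  have hTρ : T ≤ ρ := by rw [div_le_iff₀ (by positivity)]; nlinarith [NNReal.coe_nonneg ρ]
  refine ⟨T, hT, hTρ, fun s hs y hy ↦ ?_⟩
  have hdist : ∀ t ∈ Icc s (s + T), dist t b ≤ ρ := fun t ht ↦ by
    rw [Real.dist_eq, abs_le]; constructor <;> linarith [ht.1, ht.2, hs.1, hs.2]
  have hmem : ∀ t ∈ Icc s (s + T), ∀ z ∈ closedBall x ρ, (t, z) ∈ closedBall (b, x) ρ :=
    fun t ht z hz ↦ by rw [← closedBall_prod_same]; exact ⟨hdist t ht, hz⟩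
  have hPL : IsPicardLindelof v (tmin := s) (tmax := s + T) ⟨s, by simp [hT.le]⟩ x ρ (ρ / 2) L K :=
    { lipschitzOnWith := fun t ht ↦ hv.of_uncurry_closedBall (hdist t ht)
      continuousOn := fun z hz ↦ hv.continuousOn.comp (by fun_prop) fun t ht ↦ hmem t ht z hz
      norm_le := fun t ht z hz ↦ by
        have h := hv.dist_le_mul _ (hmem t ht z hz) _ (mem_closedBall_self ρ.2)
        rw [uncurry_apply_pair, uncurry_apply_pair, dist_eq_norm] at h
        have := norm_le_norm_add_norm_sub' (v t z) (v b x)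
        simp only [L, NNReal.coe_add, NNReal.coe_mul, coe_nnnorm, NNReal.coe_one]
        linarith [mul_le_mul_of_nonneg_left (hmem t ht z hz) K.coe_nonneg]
      mul_max_le := by
        simp only [add_sub_cancel_left, sub_self, max_eq_left hT.le, T, NNReal.coe_div]
        field_simp
        norm_num }
  exact hPL.exists_eq_forall_mem_Icc_hasDerivWithinAt_mem_closedBall (by simpa using hy)

theorem hasDerivAt_ite_lt_of_eqOn {f α : ℝ → E} {a b s c : ℝ}
    (hf : ∀ t ∈ Ioo a b, HasDerivAt f (v t (f t)) t)
    (hα : ∀ t ∈ Ioo s c, HasDerivAt α (v t (α t)) t) (hsb : s < b) (heq : EqOn α f (Ioo s b)) :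
    ∀ t ∈ Ioo a c, HasDerivAt (fun t ↦ if t < b then f t else α t)
      (v t (if t < b then f t else α t)) t := by
  intro t ht
  by_cases htb : t < b
  · have hev : (fun t ↦ if t < b then f t else α t) =ᶠ[𝓝 t] f :=
      eventually_of_mem (isOpen_Iio.mem_nhds htb) fun u hu ↦ if_pos hu
    rw [if_pos htb]
    exact (hf t ⟨ht.1, htb⟩).congr_of_eventuallyEq hev
  · have hts : t ∈ Ioo s c := ⟨hsb.trans_le (not_lt.1 htb), ht.2⟩
    have hev : (fun t ↦ if t < b then f t else α t) =ᶠ[𝓝 t] α := by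
      refine eventually_of_mem (isOpen_Ioo.mem_nhds hts) fun u hu ↦ ?_
      dsimp only
      split_ifs with hub
      exacts [(heq ⟨hu.1, hub⟩).symm, rfl]
    rw [if_neg htb]
    exact (hα t hts).congr_of_eventuallyEq hev

theorem exists_extension_of_tendsto_nhdsLT [CompleteSpace E] {f : ℝ → E} {a b : ℝ} {x : E}
    {N : Set E} (hab : a < b) (hv : ContDiffAt ℝ 1 (uncurry v) (b, x)) (hN : N ∈ 𝓝 x)
    (hf : ∀ t ∈ Ioo a b, HasDerivAt f (v t (f t)) t) (hfx : Tendsto f (𝓝[<] b) (𝓝 x)) :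
    ∃ ε > 0, ∃ g : ℝ → E, EqOn g f (Iio b) ∧
      (∀ t ∈ Ioo a (b + ε), HasDerivAt g (v t (g t)) t) ∧ MapsTo g (Ico b (b + ε)) N := by
  obtain ⟨K, S, hS, hlip⟩ := hv.exists_lipschitzOnWith
  obtain ⟨ρ, hρ, hρS⟩ :=
    nhds_basis_closedBall.mem_iff.1 (inter_mem hS (prod_mem_nhds univ_mem hN))
  lift ρ to ℝ≥0 using hρ.le
  have hlip : LipschitzOnWith K (uncurry v) (closedBall (b, x) ρ) :=
    hlip.mono fun p hp ↦ (hρS hp).1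
  have hρN : closedBall x ρ ⊆ N := fun y hy ↦
    (hρS (by rw [← closedBall_prod_same]; exact ⟨mem_closedBall_self ρ.2, hy⟩ :
      (b, y) ∈ closedBall (b, x) ρ)).2.2
  obtain ⟨T, hT, hTρ, hsol⟩ :=
    exists_forall_mem_closedBall_hasDerivWithinAt_of_lipschitzOnWith hρ hlip
  -- `T` does not depend on the starting time: a solution started close enough to `b` runs past it.
  obtain ⟨l, hl, hlf⟩ := (mem_nhdsLT_iff_exists_mem_Ico_Ioo_subset
    (max_lt hab (sub_lt_self b hT) : max a (b - T) < b)).1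
    (hfx (closedBall_mem_nhds x (half_pos hρ)))
  obtain ⟨s, hls, hsb⟩ := exists_between hl.2
  have has : a < s := (le_max_left a (b - T)).trans_lt (hl.1.trans_lt hls)
  have hTs : b - T < s := (le_max_right a (b - T)).trans_lt (hl.1.trans_lt hls)
  obtain ⟨α, hαs, hα⟩ := hsol s ⟨hTs.le, hsb.le⟩ (f s) (hlf ⟨hls, hsb⟩)
  have hαf : EqOn α f (Ico s b) := by
    intro t ht
    have hsub : Icc s t ⊆ Icc s (s + T) := Icc_subset_Icc_right (by linarith [ht.2])
    have hst : Icc s t ⊆ Ioo a b := fun u hu ↦ ⟨has.trans_le hu.1, hu.2.trans_lt ht.2⟩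
    have hα' : ∀ u ∈ Ico s t, HasDerivWithinAt α (v u (α u)) (Ici u) u := fun u hu ↦
      (hα u (hsub (Ico_subset_Icc_self hu))).1.mono_of_mem_nhdsWithin
        (mem_of_superset (Icc_mem_nhdsGE (by linarith [hu.2, ht.2])) (Icc_subset_Icc_left hu.1))
    exact ODE_solution_unique_of_mem_Icc_right (s := fun _ ↦ closedBall x ρ)
      (fun u hu ↦ hlip.of_uncurry_closedBall (by
        rw [Real.dist_eq, abs_le]; constructor <;> linarith [hu.1, hu.2, ht.2]))
      (fun u hu ↦ (hα u (hsub hu)).1.continuousWithinAt.mono hsub) hα'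
      (fun u hu ↦ (hα u (hsub (Ico_subset_Icc_self hu))).2)
      (fun u hu ↦ (hf u (hst hu)).continuousAt.continuousWithinAt)
      (fun u hu ↦ (hf u (hst (Ico_subset_Icc_self hu))).hasDerivWithinAt)
      (fun u hu ↦ closedBall_subset_closedBall (half_le_self ρ.2)
        (hlf ⟨hls.trans_le hu.1, hu.2.trans ht.2⟩)) hαs ⟨ht.1, le_rfl⟩
  refine ⟨s + T - b, by linarith, fun t ↦ if t < b then f t else α t, fun t ht ↦ if_pos ht,
    ?_, fun t ht ↦ ?_⟩
  · rw [add_sub_cancel]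
    exact hasDerivAt_ite_lt_of_eqOn hf
      (fun t ht ↦ (hα t (Ioo_subset_Icc_self ht)).1.hasDerivAt (Icc_mem_nhds ht.1 ht.2)) hsb
      (fun t ht ↦ hαf (Ioo_subset_Ico_self ht))
  · simp only [if_neg (not_lt.2 ht.1)]
    exact hρN (hα t ⟨by linarith [ht.1], by linarith [ht.2]⟩).2

end ODE

noncomputable def laneEmdenField (K m t : ℝ) (p : ℝ × ℝ) : ℝ × ℝ :=
  (p.2, -(2 / t) * p.2 - K * p.1 ^ m)

section LaneEmden

variable {K m r₀ R : ℝ} {U : ℝ → ℝ}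

theorem contDiffAt_uncurry_laneEmdenField {t : ℝ} {p : ℝ × ℝ} (ht : t ≠ 0) (hp : p.1 ≠ 0) :
    ContDiffAt ℝ 1 (uncurry (laneEmdenField K m)) (t, p) := by
  unfold laneEmdenField
  apply ContDiffAt.prodMk
  · fun_prop
  · fun_prop (disch := assumption)

theorem hasDerivAt_laneEmdenField_of_contDiffOn {s : Set ℝ} (hs : IsOpen s)
    (hU : ContDiffOn ℝ 2 U s)
    (hode : ∀ r ∈ s, deriv (deriv U) r + (2 / r) * deriv U r + K * U r ^ m = 0) {t : ℝ}
    (ht : t ∈ s) :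
    HasDerivAt (fun r ↦ (U r, deriv U r)) (laneEmdenField K m t (U t, deriv U t)) t := by
  obtain ⟨h₁, h₂⟩ := hU.hasDerivAt_and_hasDerivAt_deriv hs ht
  refine h₁.prodMk (h₂.congr_deriv ?_)
  simp only
  linarith [hode t ht]

theorem laneEmden_of_hasDerivAt_laneEmdenField {g : ℝ → ℝ × ℝ} {s : Set ℝ} (hs : IsOpen s)
    (hg : ∀ t ∈ s, HasDerivAt g (laneEmdenField K m t (g t)) t)
    (hg₁ : ∀ t ∈ s, (g t).1 ≠ 0) (hs₀ : ∀ t ∈ s, t ≠ 0) :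
    ContDiffOn ℝ 2 (fun t ↦ (g t).1) s ∧ ∀ t ∈ s, deriv (deriv fun t ↦ (g t).1) t +
      (2 / t) * deriv (fun t ↦ (g t).1) t + K * (g t).1 ^ m = 0 := by
  have h₁ : ∀ t ∈ s, HasDerivAt (fun t ↦ (g t).1) (g t).2 t := fun t ht ↦
    (hasFDerivAt_fst (p := g t)).comp_hasDerivAt t (hg t ht)
  have h₂ : ∀ t ∈ s, HasDerivAt (fun t ↦ (g t).2) (-(2 / t) * (g t).2 - K * (g t).1 ^ m) t :=
    fun t ht ↦ (hasFDerivAt_snd (p := g t)).comp_hasDerivAt t (hg t ht)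
  have hgc : ContinuousOn g s := fun t ht ↦ (hg t ht).continuousAt.continuousWithinAt
  refine ⟨contDiffOn_two_of_hasDerivAt hs h₁ h₂ ?_, fun t ht ↦ ?_⟩
  · exact ((continuousOn_const.div continuousOn_id hs₀).neg.mul hgc.snd).sub
      (continuousOn_const.mul (hgc.fst.rpow_const fun t ht ↦ Or.inl (hg₁ t ht)))
  · have hderiv : deriv (fun t ↦ (g t).1) =ᶠ[𝓝 t] fun t ↦ (g t).2 :=
      eventually_of_mem (hs.mem_nhds ht) fun u hu ↦ (h₁ u hu).deriv
    rw [hderiv.deriv_eq, (h₂ t ht).deriv, (h₁ t ht).deriv]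
    ring

theorem exists_laneEmden_extension {δ l : ℝ} (hr₀ : 0 < r₀) (hr₀R : r₀ < R)
    (hreg : ContDiffOn ℝ 2 U (Ico r₀ R)) (hpos : ∀ r ∈ Ico r₀ R, 0 < U r)
    (hode : ∀ r ∈ Ioo r₀ R, deriv (deriv U) r + (2 / r) * deriv U r + K * U r ^ m = 0)
    (hδ : 0 < δ) (hU : Tendsto U (𝓝[<] R) (𝓝 δ)) (hU' : Tendsto (deriv U) (𝓝[<] R) (𝓝 l)) :
    ∃ (ε : ℝ) (V : ℝ → ℝ), 0 < ε ∧ ContDiffOn ℝ 2 V (Ico r₀ (R + ε)) ∧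
      (∀ r ∈ Ico r₀ (R + ε), 0 < V r) ∧ EqOn V U (Ico r₀ R) ∧
      ∀ r ∈ Ioo r₀ (R + ε), deriv (deriv V) r + (2 / r) * deriv V r + K * V r ^ m = 0 := by
  obtain ⟨ε, hε, g, hgU, hg, hg₁⟩ := exists_extension_of_tendsto_nhdsLT hr₀R
    (contDiffAt_uncurry_laneEmdenField (hr₀.trans hr₀R).ne' hδ.ne')
    ((isOpen_lt continuous_const continuous_fst).mem_nhds hδ)
    (fun t ht ↦ hasDerivAt_laneEmdenField_of_contDiffOn isOpen_Ioo
      (hreg.mono Ioo_subset_Ico_self) hode ht) (hU.prodMk_nhds hU')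
  have hVU : ∀ t < R, (g t).1 = U t := fun t ht ↦ by simp [hgU ht]
  have hVpos : ∀ t ∈ Ico r₀ (R + ε), 0 < (g t).1 := by
    intro t ht
    rcases lt_or_ge t R with htR | htR
    · rw [hVU t htR]; exact hpos t ⟨ht.1, htR⟩
    · exact hg₁ ⟨htR, ht.2⟩
  obtain ⟨hV2, hVode⟩ := laneEmden_of_hasDerivAt_laneEmdenField isOpen_Ioo hg
    (fun t ht ↦ (hVpos t ⟨ht.1.le, ht.2⟩).ne') (fun t ht ↦ (hr₀.trans ht.1).ne')
  refine ⟨ε, fun t ↦ (g t).1, hε, fun t ht ↦ ?_, hVpos, fun t ht ↦ hVU t ht.2, hVode⟩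
  rcases eq_or_lt_of_le ht.1 with rfl | hrt
  · have hU₀ : ContDiffWithinAt ℝ 2 U (Ico r₀ (R + ε) ∩ Iio R) r₀ := by
      rw [Ico_inter_Iio, min_eq_right (by linarith)]
      exact hreg r₀ ⟨le_rfl, hr₀R⟩
    exact ((contDiffWithinAt_inter (Iio_mem_nhds hr₀R)).1 hU₀).congr_of_eventuallyEq
      (eventually_nhdsWithin_of_eventually_nhds (eventually_of_mem (Iio_mem_nhds hr₀R) hVU))
      (hVU r₀ hr₀R)
  · exact ((hV2 t ⟨hrt, ht.2⟩).contDiffAt (isOpen_Ioo.mem_nhds ⟨hrt, ht.2⟩)).contDiffWithinAt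

theorem hasDerivAt_sq_mul_deriv (hr₀ : 0 ≤ r₀) (hU : ContDiffOn ℝ 2 U (Ioo r₀ R))
    (hode : ∀ r ∈ Ioo r₀ R, deriv (deriv U) r + (2 / r) * deriv U r + K * U r ^ m = 0)
    {r : ℝ} (hr : r ∈ Ioo r₀ R) :
    HasDerivAt (fun r ↦ r ^ 2 * deriv U r) (-(K * r ^ 2 * U r ^ m)) r := by
  have hr0 : r ≠ 0 := (hr₀.trans_lt hr.1).ne'
  refine ((hasDerivAt_pow 2 r).mul
    (hU.hasDerivAt_and_hasDerivAt_deriv isOpen_Ioo hr).2).congr_deriv ?_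
  rw [show deriv (deriv U) r = -(2 / r) * deriv U r - K * U r ^ m by linarith [hode r hr]]
  field_simp
  ring

theorem antitoneOn_sq_mul_deriv (hr₀ : 0 ≤ r₀) (hK : 0 ≤ K) (hU : ContDiffOn ℝ 2 U (Ioo r₀ R))
    (hpos : ∀ r ∈ Ioo r₀ R, 0 < U r)
    (hode : ∀ r ∈ Ioo r₀ R, deriv (deriv U) r + (2 / r) * deriv U r + K * U r ^ m = 0) :
    AntitoneOn (fun r ↦ r ^ 2 * deriv U r) (Ioo r₀ R) := by
  have hW := fun r hr ↦ hasDerivAt_sq_mul_deriv hr₀ hU hode (r := r) hr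
  refine antitoneOn_of_deriv_nonpos (convex_Ioo r₀ R)
    (fun r hr ↦ (hW r hr).continuousAt.continuousWithinAt)
    (fun r hr ↦ (hW r (interior_subset hr)).differentiableAt.differentiableWithinAt)
    fun r hr ↦ ?_
  rw [interior_Ioo] at hr
  rw [(hW r hr).deriv, neg_nonpos]
  have := rpow_pos_of_pos (hpos r hr) m
  positivity

theorem antitoneOn_Ico_of_deriv_neg (hr₀ : 0 ≤ r₀) (hK : 0 ≤ K) (hU : ContDiffOn ℝ 2 U (Ioo r₀ R))
    (hpos : ∀ r ∈ Ioo r₀ R, 0 < U r)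
    (hode : ∀ r ∈ Ioo r₀ R, deriv (deriv U) r + (2 / r) * deriv U r + K * U r ^ m = 0)
    {r₁ : ℝ} (hr₁ : r₁ ∈ Ioo r₀ R) (hUr₁ : deriv U r₁ < 0) :
    AntitoneOn U (Ico r₁ R) := by
  have hsub : Ico r₁ R ⊆ Ioo r₀ R := fun r hr ↦ ⟨hr₁.1.trans_le hr.1, hr.2⟩
  have hU' := fun r (hr : r ∈ Ico r₁ R) ↦
    (hU.hasDerivAt_and_hasDerivAt_deriv isOpen_Ioo (hsub hr)).1
  refine antitoneOn_of_deriv_nonpos (convex_Ico r₁ R)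
    (fun r hr ↦ (hU' r hr).continuousAt.continuousWithinAt)
    (fun r hr ↦ (hU' r (interior_subset hr)).differentiableAt.differentiableWithinAt)
    fun r hr ↦ ?_
  have hW := antitoneOn_sq_mul_deriv hr₀ hK hU hpos hode hr₁ (hsub (interior_subset hr))
    (interior_subset hr).1
  have hWr₁ : r₁ ^ 2 * deriv U r₁ < 0 :=
    mul_neg_of_pos_of_neg (pow_pos (hr₀.trans_lt hr₁.1) 2) hUr₁
  exact (neg_of_mul_neg_right (hW.trans_lt hWr₁) (sq_nonneg r)).le

theorem bddBelow_sq_mul_deriv (hr₀ : 0 ≤ r₀) (hK : 0 ≤ K) (hm : 0 ≤ m)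
    (hU : ContDiffOn ℝ 2 U (Ioo r₀ R))
    (hpos : ∀ r ∈ Ioo r₀ R, 0 < U r)
    (hode : ∀ r ∈ Ioo r₀ R, deriv (deriv U) r + (2 / r) * deriv U r + K * U r ^ m = 0)
    {r₁ : ℝ} (hr₁ : r₁ ∈ Ioo r₀ R) (hUanti : AntitoneOn U (Ico r₁ R)) :
    BddBelow ((fun r ↦ r ^ 2 * deriv U r) '' Ioo r₁ R) := by
  have hr₁pos : 0 < r₁ := hr₀.trans_lt hr₁.1
  have hsub : Ico r₁ R ⊆ Ioo r₀ R := fun r hr ↦ ⟨hr₁.1.trans_le hr.1, hr.2⟩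
  have hW := fun r (hr : r ∈ Ico r₁ R) ↦ hasDerivAt_sq_mul_deriv hr₀ hU hode (hsub hr)
  -- `U ≤ U r₁` past `r₁` bounds `(r² U')' = -K r² U^m` from below.
  have hslope := (convex_Ico r₁ R).mul_sub_le_image_sub_of_le_deriv
    (C := -(K * R ^ 2 * U r₁ ^ m))
    (fun r hr ↦ (hW r hr).continuousAt.continuousWithinAt)
    (fun r hr ↦ (hW r (interior_subset hr)).differentiableAt.differentiableWithinAt)
    (fun r hr ↦ by
      rw [interior_Ico] at hr
      rw [(hW r (Ioo_subset_Ico_self hr)).deriv, neg_le_neg_iff]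
      have hUr := hpos r (hsub (Ioo_subset_Ico_self hr))
      have := rpow_nonneg hUr.le m
      have hr0 : 0 ≤ r := (hr₁pos.trans hr.1).le
      have hrR : r ≤ R := hr.2.le
      have hUle : U r ≤ U r₁ := hUanti ⟨le_rfl, hr₁.2⟩ (Ioo_subset_Ico_self hr) hr.1.le
      gcongr)
  refine ⟨r₁ ^ 2 * deriv U r₁ - K * R ^ 2 * U r₁ ^ m * R, ?_⟩
  rintro _ ⟨r, hr, rfl⟩
  have hC : 0 ≤ K * R ^ 2 * U r₁ ^ m := by
    have := rpow_pos_of_pos (hpos r₁ hr₁) m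
    positivity
  have := hslope r₁ ⟨le_rfl, hr₁.2⟩ r (Ioo_subset_Ico_self hr) hr.1.le
  nlinarith [hr.2]

theorem exists_tendsto_nhdsLT_of_deriv_neg (hr₀ : 0 ≤ r₀) (hK : 0 ≤ K) (hm : 0 ≤ m)
    (hU : ContDiffOn ℝ 2 U (Ioo r₀ R)) (hpos : ∀ r ∈ Ioo r₀ R, 0 < U r)
    (hode : ∀ r ∈ Ioo r₀ R, deriv (deriv U) r + (2 / r) * deriv U r + K * U r ^ m = 0)
    {r₁ : ℝ} (hr₁ : r₁ ∈ Ioo r₀ R) (hUr₁ : deriv U r₁ < 0) :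
    ∃ δ ≥ 0, ∃ l < 0, Tendsto U (𝓝[<] R) (𝓝 δ) ∧ Tendsto (deriv U) (𝓝[<] R) (𝓝 l) := by
  have hUanti := antitoneOn_Ico_of_deriv_neg hr₀ hK hU hpos hode hr₁ hUr₁
  have hWanti := antitoneOn_sq_mul_deriv hr₀ hK hU hpos hode
  have hr₁R : Ioo r₁ R ⊆ Ioo r₀ R := Ioo_subset_Ioo_left hr₁.1.le
  have hIoo : (Ioo r₁ R).Nonempty := nonempty_Ioo.2 hr₁.2
  have hIooR : Ioo r₁ R ∈ 𝓝[<] R := Ioo_mem_nhdsLT hr₁.2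
  obtain ⟨δ, hUlim⟩ : ∃ δ, Tendsto U (𝓝[<] R) (𝓝 δ) :=
    ⟨_, (hUanti.mono Ioo_subset_Ico_self).tendsto_nhdsWithin_Ioo_left hIoo
      ⟨0, by rintro _ ⟨r, hr, rfl⟩; exact (hpos r (hr₁R hr)).le⟩⟩
  obtain ⟨w, hWlim⟩ : ∃ w, Tendsto (fun r ↦ r ^ 2 * deriv U r) (𝓝[<] R) (𝓝 w) :=
    ⟨_, (hWanti.mono hr₁R).tendsto_nhdsWithin_Ioo_left hIoo
      (bddBelow_sq_mul_deriv hr₀ hK hm hU hpos hode hr₁ hUanti)⟩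
  have hw : w < 0 := by
    refine (le_of_tendsto hWlim ?_).trans_lt
      (mul_neg_of_pos_of_neg (pow_pos (hr₀.trans_lt hr₁.1) 2) hUr₁)
    filter_upwards [hIooR] with r hr using hWanti hr₁ (hr₁R hr) hr.1.le
  have hR : 0 < R ^ 2 := pow_pos (hr₀.trans_lt (hr₁.1.trans hr₁.2)) 2
  refine ⟨δ, ge_of_tendsto hUlim ?_, w / R ^ 2, div_neg_of_neg_of_pos hw hR, hUlim, ?_⟩
  · filter_upwards [hIooR] with r hr using (hpos r (hr₁R hr)).le
  · refine (hWlim.div (((continuous_pow 2).tendsto R).mono_left nhdsWithin_le_nhds)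
      hR.ne').congr' ?_
    filter_upwards [hIooR] with r hr
    have : r ≠ 0 := (hr₀.trans_lt (hr₁.1.trans hr.1)).ne'
    simp only [Pi.div_apply]
    field_simp

end LaneEmden

theorem laneEmden_boundary_asymptotics
    (γ K r₀ R : ℝ) (U : ℝ → ℝ)
    (hγ : 1 < γ) (hK : 0 < K) (hr₀ : 0 < r₀) (hr₀R : r₀ < R)
    (hreg : ContDiffOn ℝ 2 U (Ico r₀ R))
    (hpos : ∀ r ∈ Ico r₀ R, 0 < U r)
    (hode : ∀ r ∈ Ioo r₀ R,
      deriv (deriv U) r + (2/r) * deriv U r + K * U r ^ (1/(γ-1)) = 0)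
    (hU' : derivWithin U (Ici r₀) r₀ < 0)
    (hmax : ¬ ∃ (ε : ℝ) (V : ℝ → ℝ), 0 < ε ∧
      ContDiffOn ℝ 2 V (Ico r₀ (R + ε)) ∧
      (∀ r ∈ Ico r₀ (R + ε), 0 < V r) ∧
      Set.EqOn V U (Ico r₀ R) ∧
      (∀ r ∈ Ioo r₀ (R + ε),
        deriv (deriv V) r + (2/r) * deriv V r + K * V r ^ (1/(γ-1)) = 0)) :
    ∃ L > 0, Tendsto (fun r => U r / (R - r)) (𝓝[<] R) (𝓝 L) ∧
      ∃ C > 0, Tendsto (fun r => U r ^ (1/(γ-1)) * (R - r) ^ (-(1/(γ-1))))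
        (𝓝[<] R) (𝓝 C) := by
  have hm : 0 < 1 / (γ - 1) := one_div_pos.2 (sub_pos.2 hγ)
  have hU := hreg.mono Ioo_subset_Ico_self
  have hpos' : ∀ r ∈ Ioo r₀ R, 0 < U r := fun r hr ↦ hpos r (Ioo_subset_Ico_self hr)
  obtain ⟨r₁, hr₁, hUr₁⟩ := exists_deriv_neg_of_derivWithin_Ici_neg hr₀R hreg.continuousOn
    (hU.differentiableOn two_ne_zero) hU'
  obtain ⟨δ, hδ, l, hl, hUδ, hU'l⟩ :=
    exists_tendsto_nhdsLT_of_deriv_neg hr₀.le hK.le hm.le hU hpos' hode hr₁ hUr₁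
  obtain rfl : δ = 0 := by
    by_contra hδ0
    exact hmax (exists_laneEmden_extension hr₀ hr₀R hreg hpos hode
      (lt_of_le_of_ne hδ (Ne.symm hδ0)) hUδ hU'l)
  have hlim := tendsto_div_sub_of_tendsto_deriv hr₀R
    (fun r hr ↦ (hU.hasDerivAt_and_hasDerivAt_deriv isOpen_Ioo hr).1) hUδ hU'l
  refine ⟨-l, neg_pos.2 hl, hlim, (-l) ^ (1 / (γ - 1)), rpow_pos_of_pos (neg_pos.2 hl) _,
    hlim.rpow_mul_rpow_neg_of_div (neg_pos.2 hl) ?_ ?_ _⟩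
  · filter_upwards [Ioo_mem_nhdsLT hr₀R] with r hr using (hpos' r hr).le
  · filter_upwards [self_mem_nhdsWithin] with r hr using sub_nonneg.2 (le_of_lt hr)
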